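/- arXiv:math/0607107 — 7 statements merged into one kernel-verified Lean document; each statement's English description precedes it below -/
import Mathlib

section
/- Let x, y, z be complex numbers. If |x·y − z| ≤ |z| and |y·z − x| ≤ |x|, then min(|x|, |y|, |z|) ≤ 2. -/
/-- Proposition 4.8: if the two edges adjacent to the region of `z` resp. `y`
both point away from the vertex `(x, y, z)`, then `min(|x|,|y|,|z|) ≤ 2`. -/
theorem stmt_0 (x y z : ℂ)
    (h1 : ‖x * y - z‖ ≤ ‖z‖)
    (h2 : ‖y * z - x‖ ≤ ‖x‖) :
    min ‖x‖ (min ‖y‖ ‖z‖) ≤ 2 := by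
  set a := ‖x‖ with ha
  set b := ‖y‖ with hb
  set c := ‖z‖ with hc
  have h1' : a * b ≤ 2 * c := by
    have := norm_sub_norm_le (x * y) z
    rw [norm_mul] at this
    nlinarith [this, h1]
  have h2' : b * c ≤ 2 * a := by
    have := norm_sub_norm_le (y * z) x
    rw [norm_mul] at this
    nlinarith [this, h2]
  have hA : 0 ≤ a := norm_nonneg x
  have hB : 0 ≤ b := norm_nonneg y
  have hC : 0 ≤ c := norm_nonneg z
  rcases eq_or_lt_of_le hA with h | h
  · exact le_trans (min_le_left _ _) (by linarith)
  rcases eq_or_lt_of_le hC with h' | h'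
  · exact le_trans (le_trans (min_le_right _ _) (min_le_right _ _)) (by linarith)
  have hb2 : b ≤ 2 := by nlinarith
  exact le_trans (le_trans (min_le_right _ _) (min_le_left _ _)) hb2
end

section
/- Let x = 2 or x = −2, and let y : ℤ → ℂ satisfy y(n+1) + y(n−1) = x·y(n) for all n ∈ ℤ. Assume y(0)² + y(1)² ≠ x·y(0)·y(1). Then |y(n)| → ∞ as n → ±∞ with linear growth: there exist constants c, C > 0 and N ∈ ℕ such that c·|n| ≤ |y(n)| ≤ C·(|n| + 1) for all n ∈ ℤ with |n| ≥ N. -/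
open Filter

private lemma lin_of_rec (y : ℤ → ℂ) (hrec : ∀ n : ℤ, y (n + 1) + y (n - 1) = 2 * y n) :
    ∀ n : ℤ, y n = y 0 + (y 1 - y 0) * n := by
  have key : ∀ n : ℤ, y n = y 0 + (y 1 - y 0) * n ∧
      y (n + 1) = y 0 + (y 1 - y 0) * (n + 1) := by
    intro n
    induction n using Int.induction_on with
    | zero => constructor <;> push_cast <;> ring
    | succ k ih =>
      obtain ⟨ih1, ih2⟩ := ih
      have h := hrec ((k : ℤ) + 1)
      have e : ((k : ℤ) + 1 - 1) = (k : ℤ) := by ring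
      rw [e] at h
      constructor
      · push_cast at ih2 ⊢
        linear_combination ih2
      · push_cast at ih1 ih2 ⊢
        linear_combination h - ih1 + 2 * ih2
    | pred k ih =>
      obtain ⟨ih1, ih2⟩ := ih
      have h := hrec (-(k : ℤ))
      constructor
      · push_cast at ih1 ih2 ⊢
        linear_combination h - ih2 + 2 * ih1
      · have e : (-(k : ℤ) - 1 + 1) = -(k : ℤ) := by ring
        rw [e]
        push_cast at ih1 ⊢
        linear_combination ih1
  exact fun n => (key n).1

private lemma abs_form (x : ℂ) (hx : x = 2 ∨ x = -2)
    (y : ℤ → ℂ) (hrec : ∀ n : ℤ, y (n + 1) + y (n - 1) = x * y n)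
    (hnd : y 0 ^ 2 + y 1 ^ 2 ≠ x * y 0 * y 1) :
    ∃ a b : ℂ, b ≠ 0 ∧ ∀ n : ℤ, ‖y n‖ = ‖a + b * n‖ := by
  rcases hx with hx | hx
  · subst hx
    refine ⟨y 0, y 1 - y 0, ?_, ?_⟩
    · intro h
      apply hnd
      linear_combination (y 1 - y 0) * h
    · intro n
      rw [lin_of_rec y hrec n]
  · subst hx
    set z : ℤ → ℂ := fun n => (-1 : ℂ) ^ n * y n with hz
    have hneg : ((-1 : ℂ)) ≠ 0 := by norm_num
    have hrz : ∀ n : ℤ, z (n + 1) + z (n - 1) = 2 * z n := by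
      intro n
      have h1 : ((-1 : ℂ)) ^ (n + 1) = -(-1 : ℂ) ^ n := by
        rw [zpow_add_one₀ hneg]; ring
      have h2 : ((-1 : ℂ)) ^ (n - 1) = -(-1 : ℂ) ^ n := by
        rw [zpow_sub_one₀ hneg]; ring
      simp only [hz, h1, h2]
      linear_combination (-(-1 : ℂ) ^ n) * hrec n
    have hlin := lin_of_rec z hrz
    have habsz : ∀ n : ℤ, ‖z n‖ = ‖y n‖ := by
      intro n
      simp only [hz, norm_mul, norm_zpow, norm_neg, norm_one]
      simp
    have hz0 : z 0 = y 0 := by simp [hz]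
    have hz1 : z 1 = -y 1 := by simp [hz]
    refine ⟨z 0, z 1 - z 0, ?_, ?_⟩
    · intro h
      apply hnd
      rw [hz0, hz1] at h
      linear_combination (-(y 1) - y 0) * h
    · intro n
      rw [← habsz n, hlin n]

/-- Proposition 4.10(b): linear growth of the values of a trace map on the
neighbors of a slope with trace `±2` (when `κ ≠ 2`). -/
theorem stmt_2 (x : ℂ) (hx : x = 2 ∨ x = -2)
    (y : ℤ → ℂ) (hrec : ∀ n : ℤ, y (n + 1) + y (n - 1) = x * y n)
    (hnd : y 0 ^ 2 + y 1 ^ 2 ≠ x * y 0 * y 1) :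
    Filter.Tendsto (fun n : ℤ => ‖y n‖) Filter.atTop Filter.atTop ∧
    Filter.Tendsto (fun n : ℤ => ‖y n‖) Filter.atBot Filter.atTop ∧
    ∃ c : ℝ, 0 < c ∧ ∃ C : ℝ, 0 < C ∧ ∃ N : ℕ,
      ∀ n : ℤ, (N : ℤ) ≤ |n| →
        c * (n.natAbs : ℝ) ≤ ‖y n‖ ∧
        ‖y n‖ ≤ C * ((n.natAbs : ℝ) + 1) := by
  obtain ⟨a, b, hb, habs⟩ := abs_form x hx y hrec hnd
  set ca := ‖a‖ with hca
  set cb := ‖b‖ with hcb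
  have hcb0 : 0 < cb := by
    simpa [hcb] using (norm_pos_iff.mpr hb)
  have hca0 : 0 ≤ ca := norm_nonneg a
  set c : ℝ := cb / 2 with hc
  set C : ℝ := ca + cb with hC
  set N : ℕ := ⌈2 * ca / cb⌉₊ with hN
  have hc0 : 0 < c := by positivity
  have hC0 : 0 < C := by positivity
  have hNle : 2 * ca / cb ≤ (N : ℝ) := Nat.le_ceil _
  -- key pointwise bounds
  have key : ∀ n : ℤ, (N : ℤ) ≤ |n| →
      c * (n.natAbs : ℝ) ≤ ‖y n‖ ∧
      ‖y n‖ ≤ C * ((n.natAbs : ℝ) + 1) := by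
    intro n hn
    set m : ℝ := (n.natAbs : ℝ) with hm
    have hm0 : 0 ≤ m := by positivity
    have hmN : (N : ℝ) ≤ m := by
      rw [Int.abs_eq_natAbs] at hn
      rw [hm]
      exact_mod_cast hn
    have h2cam : 2 * ca ≤ cb * m := by
      have := hNle.trans hmN
      rw [div_le_iff₀ hcb0] at this
      linarith [this]
    have habsn : ‖((n : ℂ))‖ = m := by
      rw [Complex.norm_intCast, hm, Nat.cast_natAbs]
      push_cast
      ring
    have habsbn : ‖b * (n : ℂ)‖ = cb * m := by
      rw [norm_mul, habsn]
    have htri : cb * m ≤ ‖a + b * n‖ + ca := by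
      have h1 : b * (n : ℂ) = (a + b * n) + (-a) := by ring
      calc cb * m = ‖b * (n : ℂ)‖ := habsbn.symm
        _ = ‖(a + b * n) + (-a)‖ := congrArg _ h1
        _ ≤ ‖a + b * n‖ + ‖-a‖ := norm_add_le _ _
        _ = ‖a + b * n‖ + ca := by rw [norm_neg]
    have htri2 : ‖a + b * n‖ ≤ ca + cb * m := by
      calc ‖a + b * n‖ ≤ ‖a‖ + ‖b * n‖ :=
            norm_add_le _ _
        _ = ca + cb * m := by rw [habsbn]
    rw [habs n]
    constructor
    · have : c * m = cb / 2 * m := by rw [hc]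
      nlinarith [htri, h2cam]
    · have : C = ca + cb := hC
      nlinarith [htri2, hm0, hca0, hcb0.le]
  refine ⟨?_, ?_, c, hc0, C, hC0, N, key⟩
  · -- atTop
    refine tendsto_atTop_mono' atTop (f₁ := fun n : ℤ => c * (n : ℝ)) ?_ ?_
    · filter_upwards [eventually_ge_atTop (N : ℤ)] with n hn
      have hn0 : 0 ≤ n := le_trans (Int.ofNat_nonneg N) hn
      have habsn : |n| = n := abs_of_nonneg hn0
      have h := (key n (by rw [habsn]; exact hn)).1
      have heq : ((n.natAbs : ℝ)) = (n : ℝ) := by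
        rw [Nat.cast_natAbs, habsn]
      rw [heq] at h
      exact h
    · exact (tendsto_intCast_atTop_atTop (R := ℝ)).const_mul_atTop hc0
  · -- atBot
    refine tendsto_atTop_mono' atBot (f₁ := fun n : ℤ => c * (-(n : ℝ))) ?_ ?_
    · filter_upwards [eventually_le_atBot (-(N : ℤ))] with n hn
      have hn0 : n ≤ 0 := le_trans hn (by simp [Int.ofNat_nonneg N])
      have habsn : |n| = -n := abs_of_nonpos hn0
      have h := (key n (by rw [habsn]; linarith)).1
      have heq : ((n.natAbs : ℝ)) = -(n : ℝ) := by
        rw [Nat.cast_natAbs, habsn]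
        push_cast
        ring
      rw [heq] at h
      exact h
    · have h1 : Tendsto (fun n : ℤ => -(n : ℝ)) atBot atTop :=
        tendsto_neg_atBot_atTop.comp (tendsto_intCast_atBot_iff.2 tendsto_id)
      exact h1.const_mul_atTop hc0
end

section
/- Let κ, ν ∈ ℂ satisfy e^ν + e^{−ν} = −κ. Let x, y, z ∈ ℂ with x ≠ 0, y ≠ 0 and x² + y² + z² − x·y·z = κ + 2, and set z' = x·y − z. Then (1 + (e^ν − 1)·z/(x·y)) · (1 + (e^ν − 1)·z'/(x·y)) = e^ν · (1 − (κ+2)/x²) · (1 − (κ+2)/y²). -/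
/-- Exponentiated form of Lemma 4.12(i): `ψ(e) + ψ(-e) = ν mod 2πi` for the
generalized edge-weight function, where `z' = xy - z`. -/
theorem stmt_4 (κ ν x y z : ℂ)
    (hν : Complex.exp ν + Complex.exp (-ν) = -κ)
    (hx : x ≠ 0) (hy : y ≠ 0)
    (hv : x ^ 2 + y ^ 2 + z ^ 2 - x * y * z = κ + 2) :
    (1 + (Complex.exp ν - 1) * z / (x * y)) *
      (1 + (Complex.exp ν - 1) * (x * y - z) / (x * y)) =
    Complex.exp ν * (1 - (κ + 2) / x ^ 2) * (1 - (κ + 2) / y ^ 2) := by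
  set E := Complex.exp ν with hE
  have hE0 : E ≠ 0 := Complex.exp_ne_zero ν
  rw [Complex.exp_neg, ← hE] at hν
  have hκ : E ^ 2 + κ * E + 1 = 0 := by
    field_simp at hν
    linear_combination hν
  have key : (x * y + (E - 1) * z) * (x * y + (E - 1) * (x * y - z)) =
      E * (x ^ 2 - (κ + 2)) * (y ^ 2 - (κ + 2)) := by
    linear_combination (-(E - 1) ^ 2) * hv + (x ^ 2 + y ^ 2 - (κ + 2)) * hκ
  have h1 : 1 + (E - 1) * z / (x * y) = (x * y + (E - 1) * z) / (x * y) := by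
    field_simp
  have h2 : 1 + (E - 1) * (x * y - z) / (x * y)
      = (x * y + (E - 1) * (x * y - z)) / (x * y) := by
    field_simp
  rw [h1, h2, div_mul_div_comm, key, div_eq_iff (by
    exact mul_ne_zero (mul_ne_zero hx hy) (mul_ne_zero hx hy))]
  field_simp
end

section
/- Let κ, ν ∈ ℂ satisfy e^ν + e^{−ν} = −κ. Let x, y, z be nonzero complex numbers with x² + y² + z² − x·y·z = κ + 2. Then (1 + (e^ν − 1)·z/(x·y)) · (1 + (e^ν − 1)·x/(y·z)) · (1 + (e^ν − 1)·y/(z·x)) = e^ν · (1 − (κ+2)/x²) · (1 − (κ+2)/y²) · (1 − (κ+2)/z²). -/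
/-- Exponentiated form of Lemma 4.12(ii) at a single vertex: the sum of the
generalized edge weights over the three edges pointing at a vertex is `ν mod 2πi`. -/
theorem stmt_5 (κ ν x y z : ℂ)
    (hν : Complex.exp ν + Complex.exp (-ν) = -κ)
    (hx : x ≠ 0) (hy : y ≠ 0) (hz : z ≠ 0)
    (hv : x ^ 2 + y ^ 2 + z ^ 2 - x * y * z = κ + 2) :
    (1 + (Complex.exp ν - 1) * z / (x * y)) *
      (1 + (Complex.exp ν - 1) * x / (y * z)) *
      (1 + (Complex.exp ν - 1) * y / (z * x)) =
    Complex.exp ν * (1 - (κ + 2) / x ^ 2) * (1 - (κ + 2) / y ^ 2) *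
      (1 - (κ + 2) / z ^ 2) := by
  have he : Complex.exp ν ≠ 0 := Complex.exp_ne_zero ν
  set e := Complex.exp ν with hedef
  have hκ : e * (κ + 2) + (e - 1) ^ 2 = 0 := by
    have h : Complex.exp (-ν) = e⁻¹ := by rw [Complex.exp_neg]
    rw [h] at hν
    field_simp at hν
    linear_combination hν
  have key : (x*y + (e-1)*z) * (y*z + (e-1)*x) * (z*x + (e-1)*y)
      = e * (x^2-(κ+2)) * (y^2-(κ+2)) * (z^2-(κ+2)) := by
    linear_combination (((e - 1) * (x * y * z) - e * (κ + 2) ^ 2)) * hv +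
      (((e - 1) - (κ + 2)) * (x * y * z) + x^2*y^2 + y^2*z^2 + z^2*x^2) * hκ
  have e1 : 1 + (e-1)*z/(x*y) = (x*y+(e-1)*z)/(x*y) := by field_simp
  have e2 : 1 + (e-1)*x/(y*z) = (y*z+(e-1)*x)/(y*z) := by field_simp
  have e3 : 1 + (e-1)*y/(z*x) = (z*x+(e-1)*y)/(z*x) := by field_simp
  rw [e1, e2, e3, div_mul_div_comm, div_mul_div_comm, key]
  field_simp
end

section
/- Let x, y, z ∈ ℂ with cosh z + cosh x · cosh y ≠ 0 and cosh z + cosh(x − y) ≠ 0. Then artanh( sinh x · sinh y / (cosh z + cosh x · cosh y) ) = (1/2)·log( (cosh z + cosh(x+y)) / (cosh z + cosh(x−y)) ), where log denotes the principal branch of the complex logarithm and artanh w := (1/2)·log((1+w)/(1−w)). -/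
/-- The complex inverse hyperbolic tangent, using the principal branch of `log`. -/
noncomputable def catanh (w : ℂ) : ℂ := (1 / 2) * Complex.log ((1 + w) / (1 - w))

/-- The identity `S(x,y,z) = (1/2)·log((cosh z + cosh(x+y))/(cosh z + cosh(x−y)))`
(equations (2.6) and (2.8) of the paper). -/
theorem stmt_7 (x y z : ℂ)
    (h1 : Complex.cosh z + Complex.cosh x * Complex.cosh y ≠ 0)
    (h2 : Complex.cosh z + Complex.cosh (x - y) ≠ 0) :
    catanh (Complex.sinh x * Complex.sinh y /
        (Complex.cosh z + Complex.cosh x * Complex.cosh y)) =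
      (1 / 2) * Complex.log ((Complex.cosh z + Complex.cosh (x + y)) /
        (Complex.cosh z + Complex.cosh (x - y))) := by
  unfold catanh
  congr 2
  have hA : 1 + Complex.sinh x * Complex.sinh y /
      (Complex.cosh z + Complex.cosh x * Complex.cosh y) =
      (Complex.cosh z + Complex.cosh (x + y)) /
      (Complex.cosh z + Complex.cosh x * Complex.cosh y) := by
    rw [Complex.cosh_add]; field_simp; ring
  have hB : 1 - Complex.sinh x * Complex.sinh y /
      (Complex.cosh z + Complex.cosh x * Complex.cosh y) =
      (Complex.cosh z + Complex.cosh (x - y)) /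
      (Complex.cosh z + Complex.cosh x * Complex.cosh y) := by
    rw [Complex.cosh_sub]; field_simp; ring
  rw [hA, hB]; field_simp
end

section
/- Let φ : ℚ ∪ {∞} → ℂ satisfy the edge relations. Then the quantity φ(a)² + φ(b)² + φ(c)² − φ(a)·φ(b)·φ(c) takes the same value on every Farey triple {a,b,c}; that is, for any two Farey triples {a,b,c} and {a',b',c'}, φ(a)² + φ(b)² + φ(c)² − φ(a)φ(b)φ(c) = φ(a')² + φ(b')² + φ(c')² − φ(a')φ(b')φ(c'). -/
/-- A slope: an element of `ℚ ∪ {∞}`, with `∞ = none`. -/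
abbrev Slope := Option ℚ

/-- The numerator of a slope in lowest terms (`∞ = 1/0`). -/
def slopeNum : Slope → ℤ
  | none => 1
  | some r => r.num

/-- The denominator of a slope in lowest terms (nonnegative, `∞ = 1/0`). -/
def slopeDen : Slope → ℤ
  | none => 0
  | some r => (r.den : ℤ)

/-- Two slopes `p/q` and `r/s` are Farey neighbors if they are distinct and
`|p·s − q·r| = 1`. -/
def FareyNbr (s t : Slope) : Prop :=
  s ≠ t ∧ |slopeNum s * slopeDen t - slopeDen s * slopeNum t| = 1

/-- `{a,b,c}` is a Farey triple: pairwise Farey neighbors. -/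
def FareyTriple (a b c : Slope) : Prop :=
  FareyNbr a b ∧ FareyNbr b c ∧ FareyNbr a c

/-- `φ` satisfies the edge relations: `φ(c) + φ(c') = φ(a)·φ(b)` whenever
`{a,b,c}` and `{a,b,c'}` are Farey triples with `c ≠ c'`. -/
def EdgeRel (φ : Slope → ℂ) : Prop :=
  ∀ a b c c' : Slope, FareyTriple a b c → FareyTriple a b c' → c ≠ c' →
    φ c + φ c' = φ a * φ b

/-- A trace map with boundary parameter `κ`. -/
def IsTraceMap (φ : Slope → ℂ) (κ : ℂ) : Prop :=
  EdgeRel φ ∧ ∀ a b c : Slope, FareyTriple a b c →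
    φ a ^ 2 + φ b ^ 2 + φ c ^ 2 - φ a * φ b * φ c = κ + 2

/-- The Bowditch Q-conditions. -/
def BQ (φ : Slope → ℂ) : Prop :=
  (∀ s : Slope, φ s ∉ Complex.ofReal '' Set.Icc (-2 : ℝ) 2) ∧
    {s : Slope | ‖φ s‖ ≤ 2}.Finite

/-- The extended Bowditch Q-conditions. -/
def ExtBQ (φ : Slope → ℂ) : Prop :=
  (∀ s : Slope, φ s ∉ Complex.ofReal '' Set.Ioo (-2 : ℝ) 2) ∧
    {s : Slope | ‖φ s‖ ≤ 2}.Finite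

/-! Auxiliary development -/

def Qv (φ : Slope → ℂ) (a b c : Slope) : ℂ :=
  φ a ^ 2 + φ b ^ 2 + φ c ^ 2 - φ a * φ b * φ c

def S (n : ℤ) : Slope := some (n : ℚ)

lemma slopeNum_S (n : ℤ) : slopeNum (S n) = n := by simp [S, slopeNum]
lemma slopeDen_S (n : ℤ) : slopeDen (S n) = 1 := by simp [S, slopeDen]

lemma slopeDen_nonneg (s : Slope) : 0 ≤ slopeDen s := by
  cases s <;> simp [slopeDen]

lemma slopeDen_eq_zero {s : Slope} (h : slopeDen s = 0) : s = none := by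
  cases s with
  | none => rfl
  | some r => simp [slopeDen] at h

lemma slopeNum_none : slopeNum none = 1 := rfl
lemma slopeDen_none : slopeDen none = 0 := rfl

lemma nbr_symm {s t : Slope} (h : FareyNbr s t) : FareyNbr t s := by
  refine ⟨h.1.symm, ?_⟩
  have := h.2
  rw [abs_sub_comm] at this
  convert this using 2
  ring

lemma nbr_of_det {s t : Slope}
    (h : |slopeNum s * slopeDen t - slopeDen s * slopeNum t| = 1) : FareyNbr s t := by
  refine ⟨?_, h⟩
  rintro rfl
  rw [mul_comm] at h
  simp at h

lemma triple_perm_rot {a b c : Slope} (h : FareyTriple a b c) : FareyTriple b c a :=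
  ⟨h.2.1, nbr_symm h.2.2, nbr_symm h.1⟩

lemma triple_perm_swap23 {a b c : Slope} (h : FareyTriple a b c) : FareyTriple a c b :=
  ⟨h.2.2, nbr_symm h.2.1, h.1⟩

lemma triple_perm_swap12 {a b c : Slope} (h : FareyTriple a b c) : FareyTriple b a c :=
  ⟨nbr_symm h.1, h.2.2, h.2.1⟩

/-- local invariance -/
lemma loc {φ : Slope → ℂ} (h : EdgeRel φ) {a b c c' : Slope}
    (h1 : FareyTriple a b c) (h2 : FareyTriple a b c') (hcc : c ≠ c') :
    Qv φ a b c = Qv φ a b c' := by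
  have e := h a b c c' h1 h2 hcc
  unfold Qv
  linear_combination (φ c - φ c') * e

lemma fareyTriple_int (m n : ℤ) (h : m + 1 = n) : FareyTriple none (S m) (S n) := by
  subst h
  refine ⟨nbr_of_det ?_, nbr_of_det ?_, nbr_of_det ?_⟩
  · rw [slopeNum_none, slopeDen_none, slopeDen_S, slopeNum_S]; norm_num
  · rw [slopeNum_S, slopeDen_S, slopeNum_S, slopeDen_S]
    rw [show m * 1 - 1 * (m + 1) = -1 by ring]; norm_num
  · rw [slopeNum_none, slopeDen_none, slopeDen_S, slopeNum_S]; norm_num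

lemma S_ne {m n : ℤ} (h : m ≠ n) : S m ≠ S n := by
  simp [S]
  exact_mod_cast h

/-- the value on integer triples equals the base value -/
lemma Qint {φ : Slope → ℂ} (h : EdgeRel φ) (n : ℤ) :
    Qv φ none (S n) (S (n + 1)) = Qv φ none (S 0) (S 1) := by
  induction n using Int.induction_on with
  | zero => rfl
  | succ i IH =>
      have t1 : FareyTriple none (S (i + 1)) (S (i + 1 + 1)) := fareyTriple_int _ _ rfl
      have t2 : FareyTriple none (S (i + 1)) (S i) :=
        triple_perm_swap23 (fareyTriple_int (i : ℤ) (i + 1) rfl)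
      have e := loc h t1 t2 (S_ne (by omega))
      rw [e]
      rw [show Qv φ none (S (i+1)) (S i) = Qv φ none (S i) (S (i+1)) by unfold Qv; ring]
      exact IH
  | pred i IH =>
      rw [show (-(i:ℤ) - 1 + 1) = -i by ring]
      have t1 : FareyTriple none (S (-(i:ℤ))) (S (-(i:ℤ) - 1)) :=
        triple_perm_swap23 (fareyTriple_int (-(i:ℤ) - 1) (-(i:ℤ)) (by ring))
      have t2 : FareyTriple none (S (-(i:ℤ))) (S (-(i:ℤ) + 1)) := fareyTriple_int _ _ rfl
      have e := loc h t1 t2 (S_ne (by omega))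
      rw [show Qv φ none (S (-(i:ℤ)-1)) (S (-(i:ℤ))) = Qv φ none (S (-(i:ℤ))) (S (-(i:ℤ)-1))
        by unfold Qv; ring]
      rw [e]
      exact IH

/-- structure: in any Farey triple one vertex is the mediant (sum) of the others -/
lemma triple_structure {a b c : Slope} (h : FareyTriple a b c) :
    (slopeNum c = slopeNum a + slopeNum b ∧ slopeDen c = slopeDen a + slopeDen b) ∨
    (slopeNum a = slopeNum b + slopeNum c ∧ slopeDen a = slopeDen b + slopeDen c) ∨
    (slopeNum b = slopeNum a + slopeNum c ∧ slopeDen b = slopeDen a + slopeDen c) := by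
  obtain ⟨⟨hab, hD⟩, ⟨hbc, hX⟩, ⟨hac, hY⟩⟩ := h
  set pa := slopeNum a; set qa := slopeDen a
  set pb := slopeNum b; set qb := slopeDen b
  set pc := slopeNum c; set qc := slopeDen c
  have key1 : (pa * qb - qa * pb) * pc =
      -((pb * qc - qb * pc) * pa) + (pa * qc - qa * pc) * pb := by ring
  have key2 : (pa * qb - qa * pb) * qc =
      -((pb * qc - qb * pc) * qa) + (pa * qc - qa * pc) * qb := by ring
  have hqa := slopeDen_nonneg a
  have hqb := slopeDen_nonneg b
  have hqc := slopeDen_nonneg c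
  have hnb : ¬(qa = 0 ∧ qb = 0) := by
    rintro ⟨h1, h2⟩
    exact hab ((slopeDen_eq_zero h1).trans (slopeDen_eq_zero h2).symm)
  rcases (abs_eq (by norm_num)).mp hD with h1 | h1 <;>
    rcases (abs_eq (by norm_num)).mp hX with h2 | h2 <;>
      rcases (abs_eq (by norm_num)).mp hY with h3 | h3 <;>
        rw [h1, h2, h3] at key1 key2 <;> omega

lemma hh_aux (s : Slope) : 1 ≤ (slopeNum s).natAbs + (slopeDen s).toNat := by
  cases s with
  | none => simp [slopeNum, slopeDen]
  | some r =>
      have := r.pos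
      simp [slopeNum, slopeDen]
      omega

/-- sign compatibility of numerators of finite Farey neighbors -/
lemma sign_compat {pa qa pb qb : ℤ} (hD : |pa * qb - qa * pb| = 1)
    (ha : 1 ≤ qa) (hb : 1 ≤ qb) :
    (0 ≤ pa ∧ 0 ≤ pb) ∨ (pa ≤ 0 ∧ pb ≤ 0) := by
  have h1 : ¬(0 < pa ∧ pb < 0) := by
    rintro ⟨u, v⟩
    have e1 : 1 ≤ pa * qb := by nlinarith
    have e2 : qa * pb ≤ -1 := by nlinarith
    rcases (abs_eq (by norm_num)).mp hD with h | h <;> linarith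
  have h2 : ¬(pa < 0 ∧ 0 < pb) := by
    rintro ⟨u, v⟩
    have e1 : pa * qb ≤ -1 := by nlinarith
    have e2 : 1 ≤ qa * pb := by nlinarith
    rcases (abs_eq (by norm_num)).mp hD with h | h <;> linarith
  by_contra hc
  push_neg at hc
  omega

/-- flip construction: replace the mediant by the "difference" slope -/
lemma flip_exists {a b : Slope} (hab : FareyNbr a b)
    (hlt : slopeDen b < slopeDen a) (hb : 0 < slopeDen b) :
    ∃ c' : Slope, FareyTriple a b c' ∧
      slopeNum c' = slopeNum a - slopeNum b ∧ slopeDen c' = slopeDen a - slopeDen b := by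
  set pa := slopeNum a; set qa := slopeDen a
  set pb := slopeNum b; set qb := slopeDen b
  have hD := hab.2
  have hg : Int.gcd (pa - pb) (qa - qb) = 1 := by
    have hd1 : ((Int.gcd (pa - pb) (qa - qb) : ℤ)) ∣ (pa * qb - qa * pb) := by
      rw [show pa * qb - qa * pb = (pa - pb) * qb - (qa - qb) * pb by ring]
      exact dvd_sub ((Int.gcd_dvd_left _ _).mul_right _) ((Int.gcd_dvd_right _ _).mul_right _)
    have hd2 : ((Int.gcd (pa - pb) (qa - qb) : ℤ)) ∣ (1 : ℤ) := by
      rcases (abs_eq (by norm_num : (0:ℤ) ≤ 1)).mp hD with h | h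
      · rw [h] at hd1; exact hd1
      · rw [h] at hd1; simpa using hd1
    have hle : ((Int.gcd (pa - pb) (qa - qb) : ℤ)) ≤ 1 := Int.le_of_dvd one_pos hd2
    have hne : Int.gcd (pa - pb) (qa - qb) ≠ 0 := by
      intro h0
      obtain ⟨-, h2⟩ := Int.gcd_eq_zero_iff.mp h0
      omega
    omega
  have hq : (0:ℤ) < qa - qb := by omega
  refine ⟨some (Rat.mk' (pa - pb) (qa - qb).toNat (by omega) ?_), ?_⟩
  · rw [show (qa - qb).toNat = (qa - qb).natAbs by omega]
    exact hg
  · set c' : Slope := some (Rat.mk' (pa - pb) (qa - qb).toNat (by omega)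
      (by rw [show (qa - qb).toNat = (qa - qb).natAbs by omega]; exact hg)) with hc'
    have hnum : slopeNum c' = pa - pb := rfl
    have hden : slopeDen c' = qa - qb := by
      show (((qa - qb).toNat : ℕ) : ℤ) = qa - qb
      omega
    refine ⟨⟨hab, nbr_of_det ?_, nbr_of_det ?_⟩, hnum, hden⟩
    · show |slopeNum b * slopeDen c' - slopeDen b * slopeNum c'| = 1
      rw [hnum, hden, show pb * (qa - qb) - qb * (pa - pb) = -(pa * qb - qa * pb) by ring,
        abs_neg]
      exact hD
    · show |slopeNum a * slopeDen c' - slopeDen a * slopeNum c'| = 1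
      rw [hnum, hden, show pa * (qa - qb) - qa * (pa - pb) = -(pa * qb - qa * pb) by ring,
        abs_neg]
      exact hD

def hh (s : Slope) : ℕ := (slopeNum s).natAbs + (slopeDen s).toNat

lemma hh_pos (s : Slope) : 1 ≤ hh s := by
  unfold hh
  exact hh_aux s

lemma den_one_int {s : Slope} (h : slopeDen s = 1) : s = S (slopeNum s) := by
  cases s with
  | none => simp [slopeDen] at h
  | some r =>
      have hd : r.den = 1 := by
        have : ((r.den : ℤ)) = 1 := h
        exact_mod_cast this
      have hr := (Rat.den_eq_one_iff r).mp hd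
      show some r = some ((r.num : ℚ))
      exact congrArg some hr.symm

lemma den_pos_of_ne {s : Slope} (h : s ≠ none) : 1 ≤ slopeDen s := by
  cases s with
  | none => exact absurd rfl h
  | some r =>
      show (1 : ℤ) ≤ (r.den : ℤ)
      exact_mod_cast r.pos

lemma caseInf {φ : Slope → ℂ} (h : EdgeRel φ) {b c : Slope} (ht : FareyTriple none b c)
    (h1 : slopeNum c = 1 + slopeNum b) (h2 : slopeDen c = slopeDen b) :
    Qv φ none b c = Qv φ none (S 0) (S 1) := by
  have hqb : slopeDen b = 1 := by
    have hd := ht.1.2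
    rw [slopeNum_none, slopeDen_none, one_mul, zero_mul, sub_zero,
      abs_of_nonneg (slopeDen_nonneg b)] at hd
    exact hd
  have hb := den_one_int hqb
  have hc := den_one_int (h2.trans hqb)
  rw [h1, show 1 + slopeNum b = slopeNum b + 1 by ring] at hc
  rw [hb, hc]
  exact Qint h (slopeNum b)

lemma key {φ : Slope → ℂ} (h : EdgeRel φ) {n : ℕ}
    (IH : ∀ a b c : Slope, FareyTriple a b c → hh a + hh b + hh c ≤ n →
      Qv φ a b c = Qv φ none (S 0) (S 1))
    (a b c : Slope) (ht : FareyTriple a b c)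
    (h1 : slopeNum c = slopeNum a + slopeNum b)
    (h2 : slopeDen c = slopeDen a + slopeDen b)
    (hle : hh a + hh b + hh c ≤ n + 1) :
    Qv φ a b c = Qv φ none (S 0) (S 1) := by
  by_cases hA : a = none
  · subst hA
    rw [slopeNum_none] at h1
    rw [slopeDen_none, zero_add] at h2
    exact caseInf h ht h1 h2
  by_cases hB : b = none
  · subst hB
    rw [slopeNum_none] at h1
    rw [slopeDen_none, add_zero] at h2
    have tri' : FareyTriple none a c := ⟨nbr_symm ht.1, ht.2.2, ht.2.1⟩
    rw [show Qv φ a none c = Qv φ none a c from by unfold Qv; ring]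
    exact caseInf h tri' (by omega) h2
  have hqa : 1 ≤ slopeDen a := den_pos_of_ne hA
  have hqb : 1 ≤ slopeDen b := den_pos_of_ne hB
  have hsign := sign_compat ht.1.2 hqa hqb
  rcases lt_trichotomy (slopeDen a) (slopeDen b) with hq | hq | hq
  · -- qa < qb : flip using (b, a)
    obtain ⟨c', tri', hn', hd'⟩ := flip_exists (nbr_symm ht.1) hq (by omega)
    have tri2 : FareyTriple a b c' := ⟨ht.1, tri'.2.2, tri'.2.1⟩
    have hDba := (nbr_symm ht.1).2
    have hcc : c ≠ c' := by
      intro e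
      have := congrArg slopeDen e
      rw [h2, hd'] at this
      omega
    rw [loc h ht tri2 hcc]
    apply IH a b c' tri2
    simp only [hh] at hle ⊢
    omega
  · -- qa = qb : the flipped vertex is ∞
    have hdvd : slopeDen a ∣ (slopeNum a * slopeDen b - slopeDen a * slopeNum b) :=
      ⟨slopeNum a - slopeNum b, by rw [← hq]; ring⟩
    have hone : slopeDen a = 1 := by
      have hd := ht.1.2
      rcases (abs_eq (by norm_num : (0:ℤ) ≤ 1)).mp hd with e | e
      · rw [e] at hdvd
        have := Int.le_of_dvd one_pos hdvd
        omega
      · rw [e] at hdvd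
        have hdvd' : slopeDen a ∣ (1 : ℤ) := by simpa using hdvd.neg_right
        have := Int.le_of_dvd one_pos hdvd'
        omega
    have tri' : FareyTriple a b none := by
      refine ⟨ht.1, nbr_of_det ?_, nbr_of_det ?_⟩
      · rw [slopeNum_none, slopeDen_none, mul_zero, mul_one, zero_sub, abs_neg,
          abs_of_nonneg (slopeDen_nonneg b)]
        omega
      · rw [slopeNum_none, slopeDen_none, mul_zero, mul_one, zero_sub, abs_neg,
          abs_of_nonneg (slopeDen_nonneg a)]
        omega
    have hcc : c ≠ none := by
      intro e
      rw [e, slopeDen_none] at h2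
      omega
    rw [loc h ht tri' hcc]
    apply IH a b none tri'
    simp only [hh] at hle ⊢
    simp only [slopeNum_none, slopeDen_none]
    omega
  · -- qb < qa : flip using (a, b)
    obtain ⟨c', tri', hn', hd'⟩ := flip_exists ht.1 hq (by omega)
    have hcc : c ≠ c' := by
      intro e
      have := congrArg slopeDen e
      rw [h2, hd'] at this
      omega
    rw [loc h ht tri' hcc]
    apply IH a b c' tri'
    simp only [hh] at hle ⊢
    omega

lemma main {φ : Slope → ℂ} (h : EdgeRel φ) :
    ∀ n : ℕ, ∀ a b c : Slope, FareyTriple a b c → hh a + hh b + hh c ≤ n →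
      Qv φ a b c = Qv φ none (S 0) (S 1) := by
  intro n
  induction n with
  | zero =>
      intro a b c ht hle
      have := hh_pos a
      omega
  | succ n IH =>
      intro a b c ht hle
      rcases triple_structure ht with ⟨e1, e2⟩ | ⟨e1, e2⟩ | ⟨e1, e2⟩
      · exact key h IH a b c ht e1 e2 hle
      · have := key h IH b c a (triple_perm_rot ht) e1 e2 (by omega)
        rw [← this]; unfold Qv; ring
      · have := key h IH a c b (triple_perm_swap23 ht) e1 e2 (by omega)
        rw [← this]; unfold Qv; ring


/-- The vertex quantity `φ(a)² + φ(b)² + φ(c)² − φ(a)φ(b)φ(c)` is the same on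
every Farey triple, for any map satisfying the edge relations. -/
theorem stmt_10 (φ : Slope → ℂ) (h : EdgeRel φ)
    (a b c a' b' c' : Slope)
    (h1 : FareyTriple a b c) (h2 : FareyTriple a' b' c') :
    φ a ^ 2 + φ b ^ 2 + φ c ^ 2 - φ a * φ b * φ c =
      φ a' ^ 2 + φ b' ^ 2 + φ c' ^ 2 - φ a' * φ b' * φ c' := by
  have e1 := main h (hh a + hh b + hh c) a b c h1 le_rfl
  have e2 := main h (hh a' + hh b' + hh c') a' b' c' h2 le_rfl
  exact e1.trans e2.symm
end

section
/- For every (x, y, z) ∈ ℂ³ there exists a unique map φ : ℚ ∪ {∞} → ℂ satisfying the edge relations with φ(∞) = x, φ(0) = y and φ(1) = z. -/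
set_option maxHeartbeats 1000000

namespace TM

def det2 (u w : ℤ × ℤ) : ℤ := u.1 * w.2 - u.2 * w.1
def Fv2 (w : ℤ × ℤ) : ℕ := w.1.natAbs + w.2.natAbs + (w.1 - w.2).natAbs
def add2 (u w : ℤ × ℤ) : ℤ × ℤ := (u.1 + w.1, u.2 + w.2)
def sub2 (u w : ℤ × ℤ) : ℤ × ℤ := (u.1 - w.1, u.2 - w.2)
def neg2 (w : ℤ × ℤ) : ℤ × ℤ := (-w.1, -w.2)
def sm2 (e : ℤ) (w : ℤ × ℤ) : ℤ × ℤ := (e * w.1, e * w.2)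

lemma keyK (s t s' t' : ℤ) (hdet : (s * t' - s' * t).natAbs = 1)
    (hp : 0 < s * s') (hn : t * t' < 0) : False := by
  have e : (s * t') * (s' * t) = (s * s') * (t * t') := by ring
  have h2 : (s * t') * (s' * t) < 0 := by
    rw [e]; exact mul_neg_of_pos_of_neg hp hn
  rcases mul_neg_iff.mp h2 with ⟨h3, h4⟩ | ⟨h3, h4⟩ <;>
  · revert hdet h3 h4
    generalize s * t' = A
    generalize s' * t = B
    intro h1 h2 h3
    omega

lemma natAbs_add_of_nonneg_mul {a b : ℤ} (h : 0 ≤ a * b) :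
    (a + b).natAbs = a.natAbs + b.natAbs := by
  rcases mul_nonneg_iff.mp h with ⟨h1, h2⟩ | ⟨h1, h2⟩ <;> omega

lemma natAbs_sub_of_nonpos_mul {a b : ℤ} (h : a * b ≤ 0) :
    (a - b).natAbs = a.natAbs + b.natAbs := by
  rcases mul_nonpos_iff.mp h with ⟨h1, h2⟩ | ⟨h1, h2⟩ <;> omega

lemma nonpos_of_natAbs_sub {a b : ℤ} (h : (a - b).natAbs = a.natAbs + b.natAbs) :
    a * b ≤ 0 := by
  by_contra hc
  push_neg at hc
  rcases mul_pos_iff.mp hc with ⟨h1, h2⟩ | ⟨h1, h2⟩ <;> omega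

/-- Sum-additive case of the Farey norm dichotomy. -/
lemma sumCase (u w : ℤ × ℤ) (hD : (det2 u w).natAbs = 1)
    (h1 : 0 ≤ u.1 * w.1) (h2 : 0 ≤ u.2 * w.2)
    (h3 : 0 ≤ (u.1 - u.2) * (w.1 - w.2)) :
    Fv2 (add2 u w) = Fv2 u + Fv2 w ∧ Fv2 (sub2 u w) < Fv2 u + Fv2 w := by
  have e1 := natAbs_add_of_nonneg_mul h1
  have e2 := natAbs_add_of_nonneg_mul h2
  have e3 := natAbs_add_of_nonneg_mul h3
  constructor
  · unfold Fv2 add2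
    simp only
    omega
  · have hle : Fv2 (sub2 u w) ≤ Fv2 u + Fv2 w := by
      unfold Fv2 sub2; simp only; omega
    rcases lt_or_eq_of_le hle with h | h
    · exact h
    · exfalso
      -- equality of sub-Fv forces all products ≤ 0, hence = 0
      have f1 : u.1 * w.1 ≤ 0 ∧ u.2 * w.2 ≤ 0 ∧ (u.1 - u.2) * (w.1 - w.2) ≤ 0 := by
        refine ⟨?_, ?_, ?_⟩ <;>
        · apply nonpos_of_natAbs_sub
          unfold Fv2 sub2 at h; simp only at h; omega
      have z1 : u.1 * w.1 = 0 := le_antisymm f1.1 h1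
      have z2 : u.2 * w.2 = 0 := le_antisymm f1.2.1 h2
      have z3 : (u.1 - u.2) * (w.1 - w.2) = 0 := le_antisymm f1.2.2 h3
      have hD' : (u.1 * w.2 - u.2 * w.1).natAbs = 1 := hD
      rcases mul_eq_zero.mp z1 with hz1 | hz1
      · rcases mul_eq_zero.mp z2 with hz2 | hz2
        · rw [hz1, hz2] at hD'; simp at hD'
        · rcases mul_eq_zero.mp z3 with hz3 | hz3
          · have hu2 : u.2 = 0 := by omega
            rw [hz1, hu2] at hD'; simp at hD'
          · have hw1 : w.1 = 0 := by omega
            rw [hz2, hw1] at hD'; simp at hD'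
      · rcases mul_eq_zero.mp z2 with hz2 | hz2
        · rcases mul_eq_zero.mp z3 with hz3 | hz3
          · have hu1 : u.1 = 0 := by omega
            rw [hu1, hz2] at hD'; simp at hD'
          · have hw2 : w.2 = 0 := by omega
            rw [hz1, hw2] at hD'; simp at hD'
        · rw [hz1, hz2] at hD'; simp at hD'

lemma Fv2_neg2 (w : ℤ × ℤ) : Fv2 (neg2 w) = Fv2 w := by
  unfold Fv2 neg2; simp only; omega

lemma det2_negr (u w : ℤ × ℤ) : det2 u (neg2 w) = - det2 u w := by
  unfold det2 neg2; simp only; ring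

lemma add2_negr (u w : ℤ × ℤ) : add2 u (neg2 w) = sub2 u w := by
  unfold add2 neg2 sub2; simp [sub_eq_add_neg]

lemma sub2_negr (u w : ℤ × ℤ) : sub2 u (neg2 w) = add2 u w := by
  unfold sub2 neg2 add2; simp [sub_neg_eq_add]

/-- The Farey norm dichotomy: for a unimodular pair exactly one of the sum and
difference is additive for the norm `Fv2`. -/
lemma oneAdd (u w : ℤ × ℤ) (hD : (det2 u w).natAbs = 1) :
    (Fv2 (add2 u w) = Fv2 u + Fv2 w ∧ Fv2 (sub2 u w) < Fv2 u + Fv2 w) ∨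
    (Fv2 (sub2 u w) = Fv2 u + Fv2 w ∧ Fv2 (add2 u w) < Fv2 u + Fv2 w) := by
  have coh : (0 ≤ u.1 * w.1 ∧ 0 ≤ u.2 * w.2 ∧ 0 ≤ (u.1 - u.2) * (w.1 - w.2)) ∨
      (u.1 * w.1 ≤ 0 ∧ u.2 * w.2 ≤ 0 ∧ (u.1 - u.2) * (w.1 - w.2) ≤ 0) := by
    have hd12 : (u.1 * w.2 - w.1 * u.2).natAbs = 1 := by
      have e : u.1 * w.2 - w.1 * u.2 = det2 u w := by unfold det2; ring
      rw [e, hD]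
    have hd13 : (u.1 * (w.1 - w.2) - w.1 * (u.1 - u.2)).natAbs = 1 := by
      have e : u.1 * (w.1 - w.2) - w.1 * (u.1 - u.2) = -det2 u w := by unfold det2; ring
      rw [e, Int.natAbs_neg, hD]
    have hd23 : (u.2 * (w.1 - w.2) - w.2 * (u.1 - u.2)).natAbs = 1 := by
      have e : u.2 * (w.1 - w.2) - w.2 * (u.1 - u.2) = -det2 u w := by unfold det2; ring
      rw [e, Int.natAbs_neg, hD]
    rcases le_or_gt 0 (u.1 * w.1) with h1 | h1 <;>
      rcases le_or_gt 0 (u.2 * w.2) with h2 | h2 <;>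
        rcases le_or_gt 0 ((u.1 - u.2) * (w.1 - w.2)) with h3 | h3
    · exact Or.inl ⟨h1, h2, h3⟩
    · refine Or.inr ⟨?_, ?_, le_of_lt h3⟩
      · by_contra hc; push_neg at hc
        exact keyK u.1 (u.1 - u.2) w.1 (w.1 - w.2) hd13 hc h3
      · by_contra hc; push_neg at hc
        exact keyK u.2 (u.1 - u.2) w.2 (w.1 - w.2) hd23 hc h3
    · refine Or.inr ⟨?_, le_of_lt h2, ?_⟩
      · by_contra hc; push_neg at hc
        exact keyK u.1 u.2 w.1 w.2 hd12 hc h2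
      · by_contra hc; push_neg at hc
        exact keyK (u.1 - u.2) u.2 (w.1 - w.2) w.2
          (by have e : (u.1 - u.2) * w.2 - (w.1 - w.2) * u.2 = det2 u w := by
                unfold det2; ring
              rw [e, hD]) hc h2
    · refine Or.inr ⟨?_, le_of_lt h2, le_of_lt h3⟩
      by_contra hc; push_neg at hc
      exact keyK u.1 u.2 w.1 w.2 hd12 hc h2
    · refine Or.inr ⟨le_of_lt h1, ?_, ?_⟩
      · by_contra hc; push_neg at hc
        exact keyK u.2 u.1 w.2 w.1
          (by have e : u.2 * w.1 - w.2 * u.1 = -det2 u w := by unfold det2; ring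
              rw [e, Int.natAbs_neg, hD]) hc h1
      · by_contra hc; push_neg at hc
        exact keyK (u.1 - u.2) u.1 (w.1 - w.2) w.1
          (by have e : (u.1 - u.2) * w.1 - (w.1 - w.2) * u.1 = det2 u w := by
                unfold det2; ring
              rw [e, hD]) hc h1
    · refine Or.inr ⟨le_of_lt h1, ?_, le_of_lt h3⟩
      by_contra hc; push_neg at hc
      exact keyK u.2 u.1 w.2 w.1
        (by have e : u.2 * w.1 - w.2 * u.1 = -det2 u w := by unfold det2; ring
            rw [e, Int.natAbs_neg, hD]) hc h1
    · refine Or.inr ⟨le_of_lt h1, le_of_lt h2, ?_⟩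
      by_contra hc; push_neg at hc
      exact keyK (u.1 - u.2) u.1 (w.1 - w.2) w.1
        (by have e : (u.1 - u.2) * w.1 - (w.1 - w.2) * u.1 = det2 u w := by
              unfold det2; ring
            rw [e, hD]) hc h1
    · exact Or.inr ⟨le_of_lt h1, le_of_lt h2, le_of_lt h3⟩
  rcases coh with ⟨h1, h2, h3⟩ | ⟨h1, h2, h3⟩
  · exact Or.inl (sumCase u w hD h1 h2 h3)
  · have hD' : (det2 u (neg2 w)).natAbs = 1 := by rw [det2_negr, Int.natAbs_neg, hD]
    have h1' : 0 ≤ u.1 * (neg2 w).1 := by unfold neg2; simp only; nlinarith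
    have h2' : 0 ≤ u.2 * (neg2 w).2 := by unfold neg2; simp only; nlinarith
    have h3' : 0 ≤ (u.1 - u.2) * ((neg2 w).1 - (neg2 w).2) := by
      unfold neg2; simp only; nlinarith
    have := sumCase u (neg2 w) hD' h1' h2' h3'
    rw [add2_negr, sub2_negr, Fv2_neg2] at this
    exact Or.inr this

def Decomp (w : ℤ × ℤ) : Prop :=
  ∃ a b, add2 a b = w ∧ (det2 a b).natAbs = 1 ∧ Fv2 a + Fv2 b = Fv2 w

def UniqueD (w : ℤ × ℤ) : Prop :=
  ∀ a b a' b', add2 a b = w → (det2 a b).natAbs = 1 → Fv2 a + Fv2 b = Fv2 w →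
    add2 a' b' = w → (det2 a' b').natAbs = 1 → Fv2 a' + Fv2 b' = Fv2 w →
    (a = a' ∧ b = b') ∨ (a = b' ∧ b = a')

/-- Bezout-type solution in the core region `p > q ≥ 1`. -/
lemma core_solution (p q : ℤ) (hq : 1 ≤ q) (hpq : q < p) (hcop : IsCoprime p q) :
    ∃ x y : ℤ, x * q - y * p = 1 ∧ 0 ≤ y ∧ y < q ∧ 0 < x ∧ x < p ∧ y < x ∧
      x - y ≤ p - q := by
  obtain ⟨u, w, huw⟩ := hcop
  -- huw : u * p + w * q = 1
  set y := (-u) % q with hy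
  have hq0 : q ≠ 0 := by omega
  have hy0 : 0 ≤ y := Int.emod_nonneg _ hq0
  have hy1 : y < q := Int.emod_lt_of_pos _ (by omega)
  have hqe := Int.emod_add_mul_ediv (-u) q
  have hdvd : q ∣ y * p + 1 := by
    refine ⟨w - ((-u) / q) * p, ?_⟩
    rw [hy]
    linear_combination p * hqe - huw
  have hx : (y * p + 1) / q * q = y * p + 1 := Int.ediv_mul_cancel hdvd
  set x := (y * p + 1) / q with hxdef
  refine ⟨x, y, by linarith [hx], hy0, hy1, ?_, ?_, ?_, ?_⟩
  · -- 0 < x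
    by_contra hc; push_neg at hc
    have h1 : x * q ≤ 0 := mul_nonpos_iff.mpr (Or.inr ⟨hc, by omega⟩)
    nlinarith [mul_nonneg hy0 (show (0:ℤ) ≤ p by omega)]
  · -- x < p
    have h1 : y * p ≤ (q - 1) * p := by
      apply mul_le_mul_of_nonneg_right (by omega) (by omega)
    have h2 : x * q < p * q := by nlinarith
    exact lt_of_mul_lt_mul_right h2 (by omega)
  · -- y < x
    have h1 : y * q ≤ y * p := by
      apply mul_le_mul_of_nonneg_left (by omega) hy0
    have h2 : y * q < x * q := by nlinarith
    exact lt_of_mul_lt_mul_right h2 (by omega)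
  · -- x - y ≤ p - q
    have h1 : y * (p - q) ≤ (q - 1) * (p - q) := by
      apply mul_le_mul_of_nonneg_right (by omega) (by omega)
    have h2 : (x - y) * q ≤ (p - q) * q := by nlinarith
    exact le_of_mul_le_mul_right h2 (by omega)

/-- Existence of additive decomposition in the core region. -/
lemma decomp_core (p q : ℤ) (hq : 1 ≤ q) (hpq : q < p) (hcop : IsCoprime p q) :
    Decomp (p, q) := by
  obtain ⟨x, y, hdet, h1, h2, h3, h4, h5, h6⟩ := core_solution p q hq hpq hcop
  refine ⟨(x, y), (p - x, q - y), ?_, ?_, ?_⟩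
  · unfold add2; simp
  · have e : det2 (x, y) (p - x, q - y) = x * q - y * p := by unfold det2; ring
    rw [e, hdet]; rfl
  · unfold Fv2; simp only; omega

/-- Box uniqueness in the core region. -/
lemma core_box_unique (p q x y x' y' : ℤ) (hq : 1 ≤ q) (hpq : q < p)
    (hcop : IsCoprime p q)
    (b1 : 0 ≤ x ∧ x ≤ p ∧ 0 ≤ y ∧ y ≤ q ∧ 0 ≤ x - y ∧ x - y ≤ p - q)
    (b2 : 0 ≤ x' ∧ x' ≤ p ∧ 0 ≤ y' ∧ y' ≤ q ∧ 0 ≤ x' - y' ∧ x' - y' ≤ p - q)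
    (h1 : x * q - y * p = 1) (h2 : x' * q - y' * p = 1) : x = x' ∧ y = y' := by
  -- exclude y = q, y' = q
  have hyq : ∀ a b : ℤ, 0 ≤ a → a ≤ p → a * q - b * p = 1 → b ≤ q → b < q := by
    intro a b ha hap hab hbq
    rcases lt_or_eq_of_le hbq with h | h
    · exact h
    · exfalso
      rw [← h] at hab
      have hdq : q ∣ 1 := ⟨a - p, by rw [← h]; linear_combination -hab⟩
      have hq1 : q = 1 := by
        have := Int.le_of_dvd one_pos hdq; omega
      rw [h, hq1] at hab
      omega
  have hyy : y < q := hyq x y b1.1 b1.2.1 h1 b1.2.2.2.1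
  have hyy' : y' < q := hyq x' y' b2.1 b2.2.1 h2 b2.2.2.2.1
  have hdvd : q ∣ (y - y') * p := ⟨x - x', by linear_combination h2 - h1⟩
  have hdvd2 : q ∣ y - y' := (hcop.symm).dvd_of_dvd_mul_right hdvd
  obtain ⟨k, hk⟩ := hdvd2
  have hb1 : y - y' < q := by omega
  have hb2 : -q < y - y' := by omega
  have hk0 : k = 0 := by
    rcases lt_trichotomy k 0 with h | h | h
    · nlinarith [mul_le_mul_of_nonneg_left (show k ≤ -1 by omega) (show (0:ℤ) ≤ q by omega)]
    · exact h
    · nlinarith [mul_le_mul_of_nonneg_left (show (1:ℤ) ≤ k by omega) (show (0:ℤ) ≤ q by omega)]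
  rw [hk0, mul_zero] at hk
  have hyeq : y = y' := by omega
  subst hyeq
  have : (x - x') * q = 0 := by linear_combination h1 - h2
  rcases mul_eq_zero.mp this with h | h
  · omega
  · omega

/-- Uniqueness of additive decompositions in the core region. -/
lemma unique_core (p q : ℤ) (hq : 1 ≤ q) (hpq : q < p) (hcop : IsCoprime p q) :
    UniqueD (p, q) := by
  -- first: every decomposition part lies in the box, and has det ±1 against (p,q)
  have box : ∀ a b : ℤ × ℤ, add2 a b = (p, q) → Fv2 a + Fv2 b = Fv2 (p, q) →
      0 ≤ a.1 ∧ a.1 ≤ p ∧ 0 ≤ a.2 ∧ a.2 ≤ q ∧ 0 ≤ a.1 - a.2 ∧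
        a.1 - a.2 ≤ p - q := by
    intro a b hsum hF
    have e1 : a.1 + b.1 = p := congrArg Prod.fst hsum
    have e2 : a.2 + b.2 = q := congrArg Prod.snd hsum
    unfold Fv2 at hF
    simp only at hF
    omega
  intro a b a' b' hs hd hF hs' hd' hF'
  have bA := box a b hs hF
  have bB := box b a (by rw [← hs]; unfold add2; simp [add_comm]) (by omega)
  have bA' := box a' b' hs' hF'
  have bB' := box b' a' (by rw [← hs']; unfold add2; simp [add_comm]) (by omega)
  have e1 : a.1 + b.1 = p := congrArg Prod.fst hs
  have e2 : a.2 + b.2 = q := congrArg Prod.snd hs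
  have e1' : a'.1 + b'.1 = p := congrArg Prod.fst hs'
  have e2' : a'.2 + b'.2 = q := congrArg Prod.snd hs'
  -- det against (p,q)
  have dA : a.1 * q - a.2 * p = det2 a b := by unfold det2; linear_combination a.2 * e1 - a.1 * e2
  have dB : b.1 * q - b.2 * p = - det2 a b := by unfold det2; linear_combination b.2 * e1 - b.1 * e2
  have dA' : a'.1 * q - a'.2 * p = det2 a' b' := by unfold det2; linear_combination a'.2 * e1' - a'.1 * e2'
  have dB' : b'.1 * q - b'.2 * p = - det2 a' b' := by unfold det2; linear_combination b'.2 * e1' - b'.1 * e2'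
  have prodeq : ∀ u v : ℤ × ℤ, u.1 = v.1 → u.2 = v.2 → u = v := by
    intro u v h1 h2; exact Prod.ext h1 h2
  rcases Int.natAbs_eq_iff.mp hd with hd1 | hd1 <;>
    rcases Int.natAbs_eq_iff.mp hd' with hd2 | hd2
  · -- both dets = 1 : a = a'
    left
    have := core_box_unique p q a.1 a.2 a'.1 a'.2 hq hpq hcop bA bA'
      (by rw [dA, hd1]; norm_num) (by rw [dA', hd2]; norm_num)
    have ha : a = a' := prodeq _ _ this.1 this.2
    refine ⟨ha, prodeq _ _ (by omega) (by omega)⟩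
  · -- det = 1, det' = -1 : a = b'
    right
    have := core_box_unique p q a.1 a.2 b'.1 b'.2 hq hpq hcop bA bB'
      (by rw [dA, hd1]; norm_num) (by rw [dB', hd2]; norm_num)
    have ha : a = b' := prodeq _ _ this.1 this.2
    refine ⟨ha, prodeq _ _ (by omega) (by omega)⟩
  · right
    have := core_box_unique p q b.1 b.2 a'.1 a'.2 hq hpq hcop bB bA'
      (by rw [dB, hd1]; norm_num) (by rw [dA', hd2]; norm_num)
    have hb : b = a' := prodeq _ _ this.1 this.2
    refine ⟨prodeq _ _ (by omega) (by omega), hb⟩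
  · left
    have := core_box_unique p q b.1 b.2 b'.1 b'.2 hq hpq hcop bB bB'
      (by rw [dB, hd1]; norm_num) (by rw [dB', hd2]; norm_num)
    have hb : b = b' := prodeq _ _ this.1 this.2
    refine ⟨prodeq _ _ (by omega) (by omega), hb⟩


/-- Transfer of decompositions along a linear `Fv2`/`det2`-preserving map. -/
lemma decomp_map (S : ℤ × ℤ → ℤ × ℤ)
    (hadd : ∀ u v, S (add2 u v) = add2 (S u) (S v))
    (hF : ∀ u, Fv2 (S u) = Fv2 u)
    (hdet : ∀ u v, (det2 (S u) (S v)).natAbs = (det2 u v).natAbs)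
    (w : ℤ × ℤ) (h : Decomp w) : Decomp (S w) := by
  obtain ⟨a, b, hsum, hd, hFs⟩ := h
  exact ⟨S a, S b, by rw [← hadd, hsum], by rw [hdet, hd], by rw [hF, hF, hF, hFs]⟩

lemma unique_map (T : ℤ × ℤ → ℤ × ℤ)
    (hadd : ∀ u v, T (add2 u v) = add2 (T u) (T v))
    (hF : ∀ u, Fv2 (T u) = Fv2 u)
    (hdet : ∀ u v, (det2 (T u) (T v)).natAbs = (det2 u v).natAbs)
    (hinj : Function.Injective T)
    (w : ℤ × ℤ) (h : UniqueD (T w)) : UniqueD w := by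
  intro a b a' b' hs hd hFs hs' hd' hFs'
  have := h (T a) (T b) (T a') (T b')
    (by rw [← hadd, hs]) (by rw [hdet, hd]) (by rw [hF, hF, hF]; omega)
    (by rw [← hadd, hs']) (by rw [hdet, hd']) (by rw [hF, hF, hF]; omega)
  rcases this with ⟨h1, h2⟩ | ⟨h1, h2⟩
  · exact Or.inl ⟨hinj h1, hinj h2⟩
  · exact Or.inr ⟨hinj h1, hinj h2⟩

def Sswap : ℤ × ℤ → ℤ × ℤ := fun w => (w.2, w.1)
def Sneg : ℤ × ℤ → ℤ × ℤ := fun w => (-w.1, -w.2)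
/-- Inverse of `(p,q) ↦ (q - p, -p)`. -/
def SMinv : ℤ × ℤ → ℤ × ℤ := fun w => (-w.2, w.1 - w.2)
/-- The map `(p,q) ↦ (q - p, -p)`. -/
def SMfwd : ℤ × ℤ → ℤ × ℤ := fun w => (w.2 - w.1, -w.1)

lemma Sswap_props : (∀ u v, Sswap (add2 u v) = add2 (Sswap u) (Sswap v)) ∧
    (∀ u, Fv2 (Sswap u) = Fv2 u) ∧
    (∀ u v, (det2 (Sswap u) (Sswap v)).natAbs = (det2 u v).natAbs) := by
  refine ⟨fun u v => rfl, fun u => by unfold Fv2 Sswap; simp only; omega, fun u v => ?_⟩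
  have e : det2 (Sswap u) (Sswap v) = - det2 u v := by unfold det2 Sswap; simp only; ring
  rw [e, Int.natAbs_neg]

lemma Sneg_props : (∀ u v, Sneg (add2 u v) = add2 (Sneg u) (Sneg v)) ∧
    (∀ u, Fv2 (Sneg u) = Fv2 u) ∧
    (∀ u v, (det2 (Sneg u) (Sneg v)).natAbs = (det2 u v).natAbs) := by
  refine ⟨fun u v => ?_, fun u => by unfold Fv2 Sneg; simp only; omega, fun u v => ?_⟩
  · unfold Sneg add2; simp only [Prod.mk.injEq]; constructor <;> ring
  · have e : det2 (Sneg u) (Sneg v) = det2 u v := by unfold det2 Sneg; simp only; ring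
    rw [e]

lemma SMinv_props : (∀ u v, SMinv (add2 u v) = add2 (SMinv u) (SMinv v)) ∧
    (∀ u, Fv2 (SMinv u) = Fv2 u) ∧
    (∀ u v, (det2 (SMinv u) (SMinv v)).natAbs = (det2 u v).natAbs) := by
  refine ⟨fun u v => ?_, fun u => by unfold Fv2 SMinv; simp only; omega, fun u v => ?_⟩
  · unfold SMinv add2; simp only [Prod.mk.injEq]; constructor <;> ring
  · have e : det2 (SMinv u) (SMinv v) = det2 u v := by unfold det2 SMinv; simp only; ring
    rw [e]

lemma SMfwd_props : (∀ u v, SMfwd (add2 u v) = add2 (SMfwd u) (SMfwd v)) ∧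
    (∀ u, Fv2 (SMfwd u) = Fv2 u) ∧
    (∀ u v, (det2 (SMfwd u) (SMfwd v)).natAbs = (det2 u v).natAbs) := by
  refine ⟨fun u v => ?_, fun u => by unfold Fv2 SMfwd; simp only; omega, fun u v => ?_⟩
  · unfold SMfwd add2; simp only [Prod.mk.injEq]; constructor <;> ring
  · have e : det2 (SMfwd u) (SMfwd v) = det2 u v := by unfold det2 SMfwd; simp only; ring
    rw [e]

/-- Existence of additive decompositions for nonnegative second coordinate. -/
lemma decomp_nonneg (p q : ℤ) (hq : 0 ≤ q) (hcop : IsCoprime p q)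
    (hF : 4 ≤ Fv2 (p, q)) : Decomp (p, q) := by
  rcases eq_or_lt_of_le hq with h0 | h0
  · -- q = 0 : impossible
    exfalso
    have : IsUnit p := isCoprime_zero_right.mp (by rw [h0]; exact hcop)
    rcases Int.isUnit_iff.mp this with h | h <;>
    · rw [h] at hF
      rw [← h0] at hF
      unfold Fv2 at hF
      simp at hF
  · rcases lt_trichotomy q p with h1 | h1 | h1
    · exact decomp_core p q (by omega) h1 hcop
    · -- p = q : then p = q = 1, excluded
      exfalso
      have : IsUnit q := hcop.isUnit_of_dvd' (by rw [h1]) dvd_rfl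
      rcases Int.isUnit_iff.mp this with h | h <;>
      · rw [← h1, h] at hF
        unfold Fv2 at hF
        simp at hF
    · rcases lt_trichotomy p 0 with h2 | h2 | h2
      · -- p < 0 < q : use SMinv ∘ core at (q - p, -p)
        have hcop' : IsCoprime (q - p) (-p) := by
          obtain ⟨u, v, huv⟩ := hcop
          exact ⟨v, -(u + v), by linear_combination huv⟩
        have hcore := decomp_core (q - p) (-p) (by omega) (by omega) hcop'
        have := decomp_map SMinv SMinv_props.1 SMinv_props.2.1 SMinv_props.2.2 _ hcore
        have e : SMinv (q - p, -p) = (p, q) := by unfold SMinv; simp only [Prod.mk.injEq]; constructor <;> ring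
        rwa [e] at this
      · -- p = 0 : q must be 1, excluded
        exfalso
        have : IsUnit q := isCoprime_zero_left.mp (by rw [← h2]; exact hcop)
        rcases Int.isUnit_iff.mp this with h | h <;>
        · rw [h2, h] at hF
          unfold Fv2 at hF
          simp at hF
      · -- 0 < p < q : swap
        have hcore := decomp_core q p h2 h1 hcop.symm
        have := decomp_map Sswap Sswap_props.1 Sswap_props.2.1 Sswap_props.2.2 _ hcore
        exact this

/-- Existence of additive decompositions. -/
lemma decomp_all (w : ℤ × ℤ) (hcop : IsCoprime w.1 w.2) (hF : 4 ≤ Fv2 w) :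
    Decomp w := by
  obtain ⟨p, q⟩ := w
  simp only at hcop hF
  rcases le_or_gt 0 q with h | h
  · exact decomp_nonneg p q h hcop hF
  · have hcop' : IsCoprime (-p) (-q) := hcop.neg_left.neg_right
    have hF' : 4 ≤ Fv2 (-p, -q) := by unfold Fv2 at hF ⊢; simp only at hF ⊢; omega
    have hcore := decomp_nonneg (-p) (-q) (by omega) hcop' hF'
    have := decomp_map Sneg Sneg_props.1 Sneg_props.2.1 Sneg_props.2.2 _ hcore
    have e : Sneg (-p, -q) = (p, q) := by unfold Sneg; simp
    rwa [e] at this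

lemma Sswap_inj : Function.Injective Sswap := by
  intro u v h
  have h1 := congrArg Prod.fst h
  have h2 := congrArg Prod.snd h
  exact Prod.ext h2 h1

lemma Sneg_inj : Function.Injective Sneg := by
  intro u v h
  have h1 := congrArg Prod.fst h
  have h2 := congrArg Prod.snd h
  unfold Sneg at h1 h2
  simp only at h1 h2
  exact Prod.ext (by omega) (by omega)

lemma SMfwd_inj : Function.Injective SMfwd := by
  intro u v h
  have h1 := congrArg Prod.fst h
  have h2 := congrArg Prod.snd h
  unfold SMfwd at h1 h2
  simp only at h1 h2
  exact Prod.ext (by omega) (by omega)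

/-- Uniqueness of additive decompositions for nonnegative second coordinate. -/
lemma unique_nonneg (p q : ℤ) (hq : 0 ≤ q) (hcop : IsCoprime p q)
    (hF : 4 ≤ Fv2 (p, q)) : UniqueD (p, q) := by
  rcases eq_or_lt_of_le hq with h0 | h0
  · exfalso
    have : IsUnit p := isCoprime_zero_right.mp (by rw [h0]; exact hcop)
    rcases Int.isUnit_iff.mp this with h | h <;>
    · rw [h] at hF
      rw [← h0] at hF
      unfold Fv2 at hF
      simp at hF
  · rcases lt_trichotomy q p with h1 | h1 | h1
    · exact unique_core p q (by omega) h1 hcop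
    · exfalso
      have : IsUnit q := hcop.isUnit_of_dvd' (by rw [h1]) dvd_rfl
      rcases Int.isUnit_iff.mp this with h | h <;>
      · rw [← h1, h] at hF
        unfold Fv2 at hF
        simp at hF
    · rcases lt_trichotomy p 0 with h2 | h2 | h2
      · have hcop' : IsCoprime (q - p) (-p) := by
          obtain ⟨u, v, huv⟩ := hcop
          exact ⟨v, -(u + v), by linear_combination huv⟩
        have hcore := unique_core (q - p) (-p) (by omega) (by omega) hcop'
        have e : SMfwd (p, q) = (q - p, -p) := rfl
        exact unique_map SMfwd SMfwd_props.1 SMfwd_props.2.1 SMfwd_props.2.2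
          SMfwd_inj _ (by rw [e]; exact hcore)
      · exfalso
        have : IsUnit q := isCoprime_zero_left.mp (by rw [← h2]; exact hcop)
        rcases Int.isUnit_iff.mp this with h | h <;>
        · rw [h2, h] at hF
          unfold Fv2 at hF
          simp at hF
      · have hcore := unique_core q p h2 h1 hcop.symm
        have e : Sswap (p, q) = (q, p) := rfl
        exact unique_map Sswap Sswap_props.1 Sswap_props.2.1 Sswap_props.2.2
          Sswap_inj _ (by rw [e]; exact hcore)

/-- Uniqueness of additive decompositions. -/
lemma unique_all (w : ℤ × ℤ) (hcop : IsCoprime w.1 w.2) (hF : 4 ≤ Fv2 w) :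
    UniqueD w := by
  obtain ⟨p, q⟩ := w
  simp only at hcop hF
  rcases le_or_gt 0 q with h | h
  · exact unique_nonneg p q h hcop hF
  · have hcop' : IsCoprime (-p) (-q) := hcop.neg_left.neg_right
    have hF' : 4 ≤ Fv2 (-p, -q) := by unfold Fv2 at hF ⊢; simp only at hF ⊢; omega
    have hcore := unique_nonneg (-p) (-q) (by omega) hcop' hF'
    have e : Sneg (p, q) = (-p, -q) := rfl
    exact unique_map Sneg Sneg_props.1 Sneg_props.2.1 Sneg_props.2.2
      Sneg_inj _ (by rw [e]; exact hcore)

/-! ### Slope-level API -/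

def vS : Slope → ℤ × ℤ := fun s => (slopeNum s, slopeDen s)

lemma vS_none : vS none = (1, 0) := rfl
lemma vS_some (r : ℚ) : vS (some r) = (r.num, (r.den : ℤ)) := rfl

lemma coprime_vS (s : Slope) : IsCoprime (vS s).1 (vS s).2 := by
  cases s with
  | none => exact isCoprime_one_left
  | some r =>
    rw [Int.isCoprime_iff_gcd_eq_one]
    have := r.reduced
    simpa [Int.gcd, vS, slopeNum, slopeDen] using this

lemma vS_den_nonneg (s : Slope) : 0 ≤ (vS s).2 := by
  cases s with
  | none => norm_num [vS, slopeDen]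
  | some r => simp [vS, slopeDen]

lemma vS_den_zero (s : Slope) (h : (vS s).2 = 0) : (vS s).1 = 1 := by
  cases s with
  | none => rfl
  | some r =>
    exfalso
    have hd := r.den_pos
    simp [vS, slopeDen] at h

lemma vS_inj {s t : Slope} (h : vS s = vS t) : s = t := by
  have h1 := congrArg Prod.fst h
  have h2 := congrArg Prod.snd h
  cases s with
  | none =>
    cases t with
    | none => rfl
    | some r =>
      exfalso
      have hd := r.den_pos
      simp [vS, slopeDen] at h2
      all_goals omega
  | some r =>
    cases t with
    | none =>
      exfalso
      have hd := r.den_pos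
      simp [vS, slopeDen] at h2
      all_goals omega
    | some r' =>
      simp [vS, slopeNum, slopeDen] at h1 h2
      exact congrArg some (Rat.ext h1 (by exact_mod_cast h2))

lemma slope_eq_of_pm {A a : Slope} (h : vS A = vS a ∨ vS A = neg2 (vS a)) : A = a := by
  rcases h with h | h
  · exact vS_inj h
  · exfalso
    have h2 := congrArg Prod.snd h
    have h1 := congrArg Prod.fst h
    unfold neg2 at h1 h2
    simp only at h1 h2
    have hA2 := vS_den_nonneg A
    have ha2 := vS_den_nonneg a
    have hz : (vS A).2 = 0 ∧ (vS a).2 = 0 := by omega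
    have e1 := vS_den_zero A hz.1
    have e2 := vS_den_zero a hz.2
    omega

/-- Construct the slope with primitive direction vector `w`, positive case. -/
lemma exists_slope_pos (w : ℤ × ℤ) (hw : IsCoprime w.1 w.2) (hpos : 0 < w.2) :
    ∃ c : Slope, vS c = w := by
  have hg := Int.isCoprime_iff_gcd_eq_one.mp hw
  have hco : w.1.natAbs.Coprime w.2.toNat := by
    unfold Int.gcd at hg
    have e : w.2.toNat = w.2.natAbs := by omega
    rw [Nat.Coprime, e]
    exact hg
  refine ⟨some (Rat.mk' w.1 w.2.toNat (by omega) hco), ?_⟩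
  unfold vS slopeNum slopeDen
  refine Prod.ext rfl ?_
  simp only
  omega

/-- Construct the slope with primitive direction vector `±w`. -/
lemma exists_slope (w : ℤ × ℤ) (hw : IsCoprime w.1 w.2) :
    ∃ c : Slope, vS c = w ∨ vS c = neg2 w := by
  rcases lt_trichotomy w.2 0 with h | h | h
  · have hw' : IsCoprime (neg2 w).1 (neg2 w).2 := by
      unfold neg2; simp only; exact hw.neg_left.neg_right
    obtain ⟨c, hc⟩ := exists_slope_pos (neg2 w) hw' (by unfold neg2; simp only; omega)
    exact ⟨c, Or.inr hc⟩
  · refine ⟨none, ?_⟩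
    rcases Int.isUnit_iff.mp (isCoprime_zero_right.mp (h ▸ hw)) with h1 | h1
    · left; rw [vS_none]; exact Prod.ext (by simp only; omega) (by simp only; omega)
    · right; rw [vS_none]; unfold neg2
      exact Prod.ext (by simp only; omega) (by simp only; omega)
  · obtain ⟨c, hc⟩ := exists_slope_pos w hw h
    exact ⟨c, Or.inl hc⟩

/-! ### Farey neighbours and determinants -/

lemma nbr_det {s t : Slope} (h : FareyNbr s t) : (det2 (vS s) (vS t)).natAbs = 1 := by
  have h2 := h.2
  have e : slopeNum s * slopeDen t - slopeDen s * slopeNum t = det2 (vS s) (vS t) := rfl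
  rw [e, Int.abs_eq_natAbs] at h2
  exact_mod_cast h2

lemma mkNbr {s t : Slope} (hne : s ≠ t) (h : (det2 (vS s) (vS t)).natAbs = 1) :
    FareyNbr s t := by
  refine ⟨hne, ?_⟩
  have e : slopeNum s * slopeDen t - slopeDen s * slopeNum t = det2 (vS s) (vS t) := rfl
  rw [e]
  rcases Int.natAbs_eq_iff.mp h with h1 | h1 <;> rw [h1] <;> norm_num

lemma Fv2_sm {e : ℤ} (he : e.natAbs = 1) (u : ℤ × ℤ) : Fv2 (sm2 e u) = Fv2 u := by
  rcases Int.natAbs_eq_iff.mp he with h | h <;> subst h <;>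
    (unfold Fv2 sm2; simp only; omega)

lemma det2_sm (e d : ℤ) (u v : ℤ × ℤ) :
    det2 (sm2 e u) (sm2 d v) = e * d * det2 u v := by
  unfold det2 sm2; simp only; ring

lemma sm2_one (u : ℤ × ℤ) : sm2 1 u = u := by
  unfold sm2; simp

lemma sm2_negone (u : ℤ × ℤ) : sm2 (-1) u = neg2 u := by
  unfold sm2 neg2; simp

lemma eq_of_sm_eq {e d : ℤ} (he : e.natAbs = 1) (hd : d.natAbs = 1) {u v : ℤ × ℤ}
    (h : sm2 e u = sm2 d v) : u = v ∨ u = neg2 v := by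
  have h1 := congrArg Prod.fst h
  have h2 := congrArg Prod.snd h
  unfold sm2 at h1 h2
  simp only at h1 h2
  rcases Int.natAbs_eq_iff.mp he with h3 | h3 <;>
    rcases Int.natAbs_eq_iff.mp hd with h4 | h4 <;>
      subst h3 <;> subst h4 <;> push_cast at h1 h2
  · left; refine Prod.ext ?_ ?_ <;> omega
  · right; unfold neg2; refine Prod.ext ?_ ?_ <;> simp only <;> omega
  · right; unfold neg2; refine Prod.ext ?_ ?_ <;> simp only <;> omega
  · left; refine Prod.ext ?_ ?_ <;> omega

/-- Cramer decomposition: in a Farey triple the third vector is `±a ± b`. -/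
lemma triple_comb {a b c : Slope} (h : FareyTriple a b c) :
    ∃ e d : ℤ, e.natAbs = 1 ∧ d.natAbs = 1 ∧
      vS c = add2 (sm2 e (vS a)) (sm2 d (vS b)) := by
  obtain ⟨hab, hbc, hac⟩ := h
  have Dab := nbr_det hab
  have Dbc := nbr_det hbc
  have Dac := nbr_det hac
  set D := det2 (vS a) (vS b) with hD
  have hD2 : D * D = 1 := by
    rcases Int.natAbs_eq_iff.mp Dab with h1 | h1 <;> rw [h1] <;> norm_num
  refine ⟨D * det2 (vS c) (vS b), D * det2 (vS a) (vS c), ?_, ?_, ?_⟩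
  · rw [Int.natAbs_mul]
    have e : (det2 (vS c) (vS b)).natAbs = (det2 (vS b) (vS c)).natAbs := by
      have : det2 (vS c) (vS b) = - det2 (vS b) (vS c) := by unfold det2; ring
      rw [this, Int.natAbs_neg]
    rw [e, Dbc, Dab]
  · rw [Int.natAbs_mul, Dac, Dab]
  · -- Cramer identity
    have cram1 : D * (vS c).1 = det2 (vS c) (vS b) * (vS a).1 + det2 (vS a) (vS c) * (vS b).1 := by
      rw [hD]; unfold det2; ring
    have cram2 : D * (vS c).2 = det2 (vS c) (vS b) * (vS a).2 + det2 (vS a) (vS c) * (vS b).2 := by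
      rw [hD]; unfold det2; ring
    refine Prod.ext ?_ ?_ <;> unfold add2 sm2 <;> simp only
    · have : (vS c).1 = D * (D * (vS c).1) := by rw [← mul_assoc, hD2, one_mul]
      rw [this, cram1]; ring
    · have : (vS c).2 = D * (D * (vS c).2) := by rw [← mul_assoc, hD2, one_mul]
      rw [this, cram2]; ring

/-- The other common neighbour lies in the `±(ea - db)` class. -/
lemma sibling_class {a b c c' : Slope} (h1 : FareyTriple a b c) (h2 : FareyTriple a b c')
    (hne : c ≠ c') {e d : ℤ} (he : e.natAbs = 1) (hd : d.natAbs = 1)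
    (hc : vS c = add2 (sm2 e (vS a)) (sm2 d (vS b))) :
    vS c' = sub2 (sm2 e (vS a)) (sm2 d (vS b)) ∨
      vS c' = neg2 (sub2 (sm2 e (vS a)) (sm2 d (vS b))) := by
  obtain ⟨e', d', he', hd', hc'⟩ := triple_comb h2
  -- coefficients are determined up to simultaneous/opposite signs
  have hee : e' = e ∨ e' = -e := by
    rcases Int.natAbs_eq_iff.mp he with h3 | h3 <;>
      rcases Int.natAbs_eq_iff.mp he' with h4 | h4 <;> omega
  have hdd : d' = d ∨ d' = -d := by
    rcases Int.natAbs_eq_iff.mp hd with h3 | h3 <;>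
      rcases Int.natAbs_eq_iff.mp hd' with h4 | h4 <;> omega
  have smneg : ∀ (k : ℤ) (u : ℤ × ℤ), sm2 (-k) u = neg2 (sm2 k u) := by
    intro k u; unfold sm2 neg2; simp only [Prod.mk.injEq]; constructor <;> ring
  rcases hee with h3 | h3 <;> rcases hdd with h4 | h4
  · exfalso; apply hne; apply vS_inj; rw [hc, hc', h3, h4]
  · left
    rw [hc', h3, h4, smneg]
    rw [add2_negr]
  · right
    rw [hc', h3, h4, smneg]
    unfold add2 neg2 sub2 sm2
    simp only [Prod.mk.injEq]
    constructor <;> ring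
  · exfalso
    refine hne (Eq.symm (slope_eq_of_pm (A := c') (a := c) ?_))
    right
    rw [hc, hc', h3, h4, smneg, smneg]
    unfold add2 neg2
    simp only [Prod.mk.injEq]
    constructor <;> ring

lemma cop_of_det {u v : ℤ × ℤ} (h : (det2 u v).natAbs = 1) : IsCoprime u.1 u.2 := by
  rcases Int.natAbs_eq_iff.mp h with h1 | h1
  · exact ⟨v.2, -v.1, by unfold det2 at h1; push_cast at h1; linear_combination h1⟩
  · exact ⟨-v.2, v.1, by unfold det2 at h1; push_cast at h1; linear_combination -h1⟩

lemma Fv2_ge2 {u : ℤ × ℤ} (h : IsCoprime u.1 u.2) : 2 ≤ Fv2 u := by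
  have : ¬(u.1 = 0 ∧ u.2 = 0) := by
    rintro ⟨h1, h2⟩
    rw [h1, h2] at h
    exact not_isCoprime_zero_zero h
  unfold Fv2
  omega

/-! ### Parent specification and the trace map -/

lemma det2_negl (u v : ℤ × ℤ) : det2 (neg2 u) v = - det2 u v := by
  unfold det2 neg2; simp only; ring

lemma det2_self (u : ℤ × ℤ) : det2 u u = 0 := by unfold det2; ring

lemma neg2_neg2 (u : ℤ × ℤ) : neg2 (neg2 u) = u := by
  unfold neg2; simp

lemma add2_comm (u v : ℤ × ℤ) : add2 u v = add2 v u := by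
  unfold add2; simp only [Prod.mk.injEq]; constructor <;> ring

lemma Fv2_pm {A : Slope} {a : ℤ × ℤ} (h : vS A = a ∨ vS A = neg2 a) :
    Fv2 (vS A) = Fv2 a := by
  rcases h with h | h
  · rw [h]
  · rw [h, Fv2_neg2]

lemma det2_pm {X Y : Slope} {u v : ℤ × ℤ} (hX : vS X = u ∨ vS X = neg2 u)
    (hY : vS Y = v ∨ vS Y = neg2 v) :
    (det2 (vS X) (vS Y)).natAbs = (det2 u v).natAbs := by
  rcases hX with h | h <;> rcases hY with h' | h' <;> rw [h, h']
  · rw [det2_negr, Int.natAbs_neg]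
  · rw [det2_negl, Int.natAbs_neg]
  · rw [det2_negl, det2_negr, Int.natAbs_neg, Int.natAbs_neg]

lemma ne_of_det {X Y : Slope} (h : (det2 (vS X) (vS Y)).natAbs = 1) : X ≠ Y := by
  intro he
  rw [he, det2_self] at h
  simp at h

lemma class_eq {C' c' : Slope} {X : ℤ × ℤ}
    (h1 : vS C' = X ∨ vS C' = neg2 X) (h2 : vS c' = X ∨ vS c' = neg2 X) : C' = c' := by
  apply slope_eq_of_pm (A := C') (a := c')
  rcases h1 with h1 | h1 <;> rcases h2 with h2 | h2
  · left; rw [h1, h2]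
  · right; rw [h1, h2, neg2_neg2]
  · right; rw [h1, h2]
  · left; rw [h1, h2]

def Pspec (s : Slope) (t : Slope × Slope × Slope) : Prop :=
  FareyTriple t.1 t.2.1 s ∧ FareyTriple t.1 t.2.1 t.2.2 ∧ s ≠ t.2.2 ∧
  Fv2 (vS t.1) < Fv2 (vS s) ∧ Fv2 (vS t.2.1) < Fv2 (vS s) ∧
  Fv2 (vS t.2.2) < Fv2 (vS s) ∧ Fv2 (vS t.1) + Fv2 (vS t.2.1) = Fv2 (vS s)

lemma exists_Pspec (s : Slope) (h4 : 4 ≤ Fv2 (vS s)) :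
    ∃ t : Slope × Slope × Slope, Pspec s t := by
  obtain ⟨a, b, hsum, hdet, hFs⟩ := decomp_all (vS s) (coprime_vS s) h4
  have hcopa : IsCoprime a.1 a.2 := cop_of_det hdet
  have hdetba : (det2 b a).natAbs = 1 := by
    have e : det2 b a = - det2 a b := by unfold det2; ring
    rw [e, Int.natAbs_neg, hdet]
  have hcopb : IsCoprime b.1 b.2 := cop_of_det hdetba
  have hdetsub : (det2 (sub2 a b) b).natAbs = 1 := by
    have e : det2 (sub2 a b) b = det2 a b := by unfold det2 sub2; simp only; ring
    rw [e, hdet]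
  have hcopsub : IsCoprime (sub2 a b).1 (sub2 a b).2 := cop_of_det hdetsub
  obtain ⟨A, hA⟩ := exists_slope a hcopa
  obtain ⟨B, hB⟩ := exists_slope b hcopb
  obtain ⟨C, hC⟩ := exists_slope (sub2 a b) hcopsub
  have hvs : vS s = add2 a b ∨ vS s = neg2 (add2 a b) := Or.inl hsum.symm
  -- determinant facts
  have dAB : (det2 (vS A) (vS B)).natAbs = 1 := by rw [det2_pm hA hB]; exact hdet
  have dAs : (det2 (vS A) (vS s)).natAbs = 1 := by
    rw [det2_pm hA hvs]
    have e : det2 a (add2 a b) = det2 a b := by unfold det2 add2; simp only; ring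
    rw [e, hdet]
  have dBs : (det2 (vS B) (vS s)).natAbs = 1 := by
    rw [det2_pm hB hvs]
    have e : det2 b (add2 a b) = - det2 a b := by unfold det2 add2; simp only; ring
    rw [e, Int.natAbs_neg, hdet]
  have dAC : (det2 (vS A) (vS C)).natAbs = 1 := by
    rw [det2_pm hA hC]
    have e : det2 a (sub2 a b) = - det2 a b := by unfold det2 sub2; simp only; ring
    rw [e, Int.natAbs_neg, hdet]
  have dBC : (det2 (vS B) (vS C)).natAbs = 1 := by
    rw [det2_pm hB hC]
    have e : det2 b (sub2 a b) = - det2 a b := by unfold det2 sub2; simp only; ring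
    rw [e, Int.natAbs_neg, hdet]
  have hsC : s ≠ C := by
    intro he
    have h0 : det2 (add2 a b) (sub2 a b) = 0 := by
      rcases hC with h | h
      · have e1 : sub2 a b = add2 a b := by rw [← h, ← he, hsum]
        rw [e1, det2_self]
      · have e1 : neg2 (sub2 a b) = add2 a b := by rw [← h, ← he, hsum]
        rw [← e1, det2_negl, det2_self, neg_zero]
    have h2 : det2 (add2 a b) (sub2 a b) = -2 * det2 a b := by
      unfold det2 add2 sub2; simp only; ring
    rw [h2] at h0
    have : det2 a b = 0 := by linarith
    rw [this] at hdet
    simp at hdet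
  -- norm facts
  have hFA : Fv2 (vS A) = Fv2 a := Fv2_pm hA
  have hFB : Fv2 (vS B) = Fv2 b := Fv2_pm hB
  have hFC : Fv2 (vS C) = Fv2 (sub2 a b) := Fv2_pm hC
  have hga : 2 ≤ Fv2 a := Fv2_ge2 hcopa
  have hgb : 2 ≤ Fv2 b := Fv2_ge2 hcopb
  have hsub_lt : Fv2 (sub2 a b) < Fv2 a + Fv2 b := by
    rcases oneAdd a b hdet with ⟨hA1, hA2⟩ | ⟨hA1, hA2⟩
    · exact hA2
    · rw [hsum] at hA2; omega
  refine ⟨(A, B, C), ⟨mkNbr (ne_of_det dAB) dAB, mkNbr (ne_of_det dBs) dBs,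
    mkNbr (ne_of_det dAs) dAs⟩,
    ⟨mkNbr (ne_of_det dAB) dAB, mkNbr (ne_of_det dBC) dBC, mkNbr (ne_of_det dAC) dAC⟩,
    hsC, ?_, ?_, ?_, ?_⟩ <;> simp only [hFA, hFB, hFC] <;> omega

lemma matching {a b c c' A B C' : Slope}
    (h1 : FareyTriple a b c) (h2 : FareyTriple a b c') (hne : c ≠ c')
    (hadd : Fv2 (vS a) + Fv2 (vS b) = Fv2 (vS c))
    (hA : FareyTriple A B c) (hB : FareyTriple A B C') (hne' : c ≠ C')
    (hadd' : Fv2 (vS A) + Fv2 (vS B) = Fv2 (vS c)) :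
    ((A = a ∧ B = b) ∨ (A = b ∧ B = a)) ∧ C' = c' := by
  obtain ⟨e1, d1, he1, hd1, hc1⟩ := triple_comb h1
  obtain ⟨e2, d2, he2, hd2, hc2⟩ := triple_comb hA
  have hga := Fv2_ge2 (coprime_vS a)
  have hgb := Fv2_ge2 (coprime_vS b)
  have h4 : 4 ≤ Fv2 (vS c) := by omega
  have uq := unique_all (vS c) (coprime_vS c) h4
  have hsib_c' := sibling_class h1 h2 hne he1 hd1 hc1
  have hres := uq (sm2 e2 (vS A)) (sm2 d2 (vS B)) (sm2 e1 (vS a)) (sm2 d1 (vS b))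
    hc2.symm
    (by rw [det2_sm, Int.natAbs_mul, Int.natAbs_mul, he2, hd2, nbr_det hA.1])
    (by rw [Fv2_sm he2, Fv2_sm hd2]; exact hadd')
    hc1.symm
    (by rw [det2_sm, Int.natAbs_mul, Int.natAbs_mul, he1, hd1, nbr_det h1.1])
    (by rw [Fv2_sm he1, Fv2_sm hd1]; exact hadd)
  rcases hres with ⟨hEA, hEB⟩ | ⟨hEA, hEB⟩
  · have hAa : A = a := slope_eq_of_pm (eq_of_sm_eq he2 he1 hEA)
    have hBb : B = b := slope_eq_of_pm (eq_of_sm_eq hd2 hd1 hEB)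
    subst hAa; subst hBb
    have hsib_C' := sibling_class h1 hB hne' he1 hd1 hc1
    exact ⟨Or.inl ⟨rfl, rfl⟩, class_eq hsib_C' hsib_c'⟩
  · have hAb : A = b := slope_eq_of_pm (eq_of_sm_eq he2 hd1 hEA)
    have hBa : B = a := slope_eq_of_pm (eq_of_sm_eq hd2 he1 hEB)
    have hA' : FareyTriple b a c := by rw [← hAb, ← hBa]; exact hA
    have hB' : FareyTriple b a C' := by rw [← hAb, ← hBa]; exact hB
    have hc1' : vS c = add2 (sm2 d1 (vS b)) (sm2 e1 (vS a)) := by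
      rw [hc1, add2_comm]
    have hsib0 := sibling_class hA' hB' hne' hd1 he1 hc1'
    have hsw : sub2 (sm2 d1 (vS b)) (sm2 e1 (vS a)) =
        neg2 (sub2 (sm2 e1 (vS a)) (sm2 d1 (vS b))) := by
      unfold sub2 neg2; simp only [Prod.mk.injEq]; constructor <;> ring
    have hsib_C' : vS C' = sub2 (sm2 e1 (vS a)) (sm2 d1 (vS b)) ∨
        vS C' = neg2 (sub2 (sm2 e1 (vS a)) (sm2 d1 (vS b))) := by
      rcases hsib0 with h | h
      · right; rw [h, hsw]
      · left; rw [h, hsw, neg2_neg2]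
    exact ⟨Or.inr ⟨hAb, hBa⟩, class_eq hsib_C' hsib_c'⟩

noncomputable def phi (x y z : ℂ) (s : Slope) : ℂ :=
  if h : 4 ≤ Fv2 (vS s) then
    phi x y z (Classical.choose (exists_Pspec s h)).1 *
      phi x y z (Classical.choose (exists_Pspec s h)).2.1 -
      phi x y z (Classical.choose (exists_Pspec s h)).2.2
  else if s = none then x else if s = some 0 then y else z
termination_by Fv2 (vS s)
decreasing_by
  · exact (Classical.choose_spec (exists_Pspec s h)).2.2.2.1
  · exact (Classical.choose_spec (exists_Pspec s h)).2.2.2.2.1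
  · exact (Classical.choose_spec (exists_Pspec s h)).2.2.2.2.2.1

lemma phi_eq (x y z : ℂ) (s : Slope) (h : 4 ≤ Fv2 (vS s)) :
    phi x y z s = phi x y z (Classical.choose (exists_Pspec s h)).1 *
      phi x y z (Classical.choose (exists_Pspec s h)).2.1 -
      phi x y z (Classical.choose (exists_Pspec s h)).2.2 := by
  rw [phi]
  rw [dif_pos h]

lemma Fv2_none : Fv2 (vS none) = 2 := rfl

lemma Fv2_zero : Fv2 (vS (some 0)) = 2 := by
  norm_num [Fv2, vS, slopeNum, slopeDen]

lemma Fv2_one : Fv2 (vS (some 1)) = 2 := by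
  norm_num [Fv2, vS, slopeNum, slopeDen]

lemma phi_none (x y z : ℂ) : phi x y z none = x := by
  rw [phi, dif_neg (by rw [Fv2_none]; omega), if_pos rfl]

lemma phi_zero (x y z : ℂ) : phi x y z (some 0) = y := by
  rw [phi, dif_neg (by rw [Fv2_zero]; omega), if_neg (by simp), if_pos rfl]

lemma phi_one (x y z : ℂ) : phi x y z (some 1) = z := by
  rw [phi, dif_neg (by rw [Fv2_one]; omega), if_neg (by simp), if_neg (by simp)]

lemma Fv2_parity (s : Slope) : Fv2 (vS s) = 2 ∨ 4 ≤ Fv2 (vS s) := by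
  cases s with
  | none => left; rfl
  | some r =>
    have hd := r.den_pos
    unfold Fv2 vS slopeNum slopeDen
    simp only
    omega

lemma base_of (s : Slope) (h : Fv2 (vS s) = 2) :
    s = none ∨ s = some 0 ∨ s = some 1 := by
  cases s with
  | none => exact Or.inl rfl
  | some r =>
    right
    have hd := r.den_pos
    unfold Fv2 vS slopeNum slopeDen at h
    simp only at h
    have hk : (r.num = 0 ∧ r.den = 1) ∨ (r.num = 1 ∧ r.den = 1) := by omega
    rcases hk with ⟨h1, h2⟩ | ⟨h1, h2⟩
    · left
      congr 1
      exact Rat.ext (by rw [h1]; rfl) (by rw [h2]; rfl)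
    · right
      congr 1
      exact Rat.ext (by rw [h1]; rfl) (by rw [h2]; rfl)

lemma edge_phi (x y z : ℂ) : EdgeRel (phi x y z) := by
  intro a b c c' h1 h2 hne
  obtain ⟨e1, d1, he1, hd1, hc1⟩ := triple_comb h1
  have hdet : (det2 (sm2 e1 (vS a)) (sm2 d1 (vS b))).natAbs = 1 := by
    rw [det2_sm, Int.natAbs_mul, Int.natAbs_mul, he1, hd1, nbr_det h1.1]
  have hga := Fv2_ge2 (coprime_vS a)
  have hgb := Fv2_ge2 (coprime_vS b)
  rcases oneAdd _ _ hdet with ⟨hs, hdlt⟩ | ⟨hs, hdlt⟩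
  · have hadd : Fv2 (vS a) + Fv2 (vS b) = Fv2 (vS c) := by
      rw [hc1, hs, Fv2_sm he1, Fv2_sm hd1]
    have h4 : 4 ≤ Fv2 (vS c) := by omega
    obtain ⟨T1, T2, Tne, L1, L2, L3, Tadd⟩ := Classical.choose_spec (exists_Pspec c h4)
    have hm := matching h1 h2 hne hadd T1 T2 Tne Tadd
    rw [phi_eq x y z c h4]
    rcases hm with ⟨hab | hab, hC⟩ <;> rw [hab.1, hab.2, hC] <;> ring
  · have hsib := sibling_class h1 h2 hne he1 hd1 hc1
    have hadd : Fv2 (vS a) + Fv2 (vS b) = Fv2 (vS c') := by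
      have e : Fv2 (vS c') = Fv2 (sub2 (sm2 e1 (vS a)) (sm2 d1 (vS b))) := Fv2_pm hsib
      rw [e, hs, Fv2_sm he1, Fv2_sm hd1]
    have h4 : 4 ≤ Fv2 (vS c') := by omega
    obtain ⟨T1, T2, Tne, L1, L2, L3, Tadd⟩ := Classical.choose_spec (exists_Pspec c' h4)
    have hm := matching h2 h1 hne.symm hadd T1 T2 Tne Tadd
    rw [phi_eq x y z c' h4]
    rcases hm with ⟨hab | hab, hC⟩ <;> rw [hab.1, hab.2, hC] <;> ring

end TM

/-- Every triple of values at the generating triple `{∞, 0, 1}` extends to a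
unique map satisfying the edge relations. -/


theorem stmt_11 (x y z : ℂ) :
    ∃! φ : Slope → ℂ,
      EdgeRel φ ∧ φ none = x ∧ φ (some 0) = y ∧ φ (some 1) = z := by
  refine ⟨TM.phi x y z, ⟨TM.edge_phi x y z, TM.phi_none x y z, TM.phi_zero x y z,
    TM.phi_one x y z⟩, ?_⟩
  rintro ψ ⟨hE, hi, h0, h1⟩
  have key : ∀ n (s : Slope), TM.Fv2 (TM.vS s) ≤ n → ψ s = TM.phi x y z s := by
    intro n
    induction n using Nat.strong_induction_on with
    | _ n ih =>
      intro s hs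
      by_cases h4 : 4 ≤ TM.Fv2 (TM.vS s)
      · obtain ⟨T1, T2, Tne, L1, L2, L3, Tadd⟩ :=
          Classical.choose_spec (TM.exists_Pspec s h4)
        have he := hE _ _ s _ T1 T2 Tne
        have e1 := ih _ (lt_of_lt_of_le L1 hs) _ le_rfl
        have e2 := ih _ (lt_of_lt_of_le L2 hs) _ le_rfl
        have e3 := ih _ (lt_of_lt_of_le L3 hs) _ le_rfl
        rw [TM.phi_eq x y z s h4, ← e1, ← e2, ← e3]
        linear_combination he
      · rcases TM.Fv2_parity s with h2 | h2
        · rcases TM.base_of s h2 with rfl | rfl | rfl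
          · rw [hi, TM.phi_none]
          · rw [h0, TM.phi_zero]
          · rw [h1, TM.phi_one]
        · omega
  exact funext fun s => key _ s le_rfl
end
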